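/- For each i ∈ {1,…,n−1}, the prescribed matrix of operators π_{s_i}(u^k_l) on ℓ²(ℕ) (with entries √(1−q^{2N+2})S, S*√(1−q^{2N+2}), ±q^{N+1}, ±q^N at the specified positions and δ_{kl} elsewhere) defines a 2n×2n matrix U over B(ℓ²(ℕ)) which is unitary: U*U = UU* = 1 in M_{2n}(B(ℓ²(ℕ))). -/

import Mathlib

/-!
Up to reindexing, `U` is the identity matrix with the two `2 × 2` blocks
`[[T, -D₁], [D₀, T*]]` and `[[T, D₁], [-D₀, T*]]` placed on the disjoint index pairs
`{i, i+1}` and `{2n-i, 2n-i+1}`, where `T = √(1 - q^{2N+2}) S`. Such a block is unitary as soon as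
`T*T + D₀² = 1`, `TT* + D₁² = 1` and `T D₀ = D₁ T` (the relations of the generators of `SU_q(2)`),
which are checked on the basis vectors `e m`; and padding a unitary with the identity along an
injective map of indices keeps it unitary.
-/

noncomputable section

abbrev H : Type := lp (fun _ : ℕ => ℂ) 2

def e (n : ℕ) : H := lp.single 2 n 1

namespace Matrix

variable {α : Type*} [Ring α] {κ ι : Type*} [Fintype κ] [DecidableEq κ] [DecidableEq ι]

/-- `M` on the rows and columns indexed by `f`, the identity elsewhere. Written as `1 + Q (M - 1) P`
with `P = Qᵀ` the `0/1` matrix of `f`, so that `P Q = 1` makes multiplicativity a ring computation. -/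
def extendByOne (f : κ → ι) (M : Matrix κ κ α) : Matrix ι ι α :=
  1 + (1 : Matrix ι ι α).submatrix id f * (M - 1) * (1 : Matrix ι ι α).submatrix f id

theorem extendByOne_one (f : κ → ι) : extendByOne f (1 : Matrix κ κ α) = 1 := by
  simp [extendByOne]

theorem extendByOne_mul [Fintype ι] {f : κ → ι} (hf : Function.Injective f) (M N : Matrix κ κ α) :
    extendByOne f M * extendByOne f N = extendByOne f (M * N) := by
  set P := (1 : Matrix ι ι α).submatrix f id
  set Q := (1 : Matrix ι ι α).submatrix id f
  have hPQ : P * Q = 1 := by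
    ext x y
    simp [P, Q, mul_apply, one_apply, hf.eq_iff]
  calc extendByOne f M * extendByOne f N
      = 1 + Q * (M - 1) * P + Q * (N - 1) * P + Q * (M - 1) * (P * Q) * (N - 1) * P := by
        simp only [extendByOne, Matrix.add_mul, Matrix.mul_add, Matrix.mul_one, Matrix.one_mul,
          Matrix.mul_assoc]
        abel
    _ = 1 + Q * ((M - 1) + (N - 1) + (M - 1) * (N - 1)) * P := by
        simp only [hPQ, Matrix.mul_one, Matrix.add_mul, Matrix.mul_add, Matrix.mul_assoc]
        abel
    _ = extendByOne f (M * N) := by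
        rw [extendByOne]
        congr 3
        noncomm_ring

theorem conjTranspose_extendByOne [StarRing α] (f : κ → ι) (M : Matrix κ κ α) :
    (extendByOne f M)ᴴ = extendByOne f Mᴴ := by
  simp [extendByOne, conjTranspose_submatrix, Matrix.mul_assoc]

theorem extendByOne_mem_unitary [Fintype ι] [StarRing α] {f : κ → ι} (hf : Function.Injective f)
    {M : Matrix κ κ α} (hM : M ∈ unitary (Matrix κ κ α)) :
    extendByOne f M ∈ unitary (Matrix ι ι α) := by
  rw [Unitary.mem_iff, star_eq_conjTranspose, conjTranspose_extendByOne, extendByOne_mul hf,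
    extendByOne_mul hf, ← star_eq_conjTranspose, Unitary.star_mul_self_of_mem hM,
    Unitary.mul_star_self_of_mem hM, extendByOne_one]
  exact ⟨rfl, rfl⟩

theorem extendByOne_apply_apply {f : κ → ι} (hf : Function.Injective f) (M : Matrix κ κ α)
    (x y : κ) : extendByOne f M (f x) (f y) = M x y := by
  simp [extendByOne, mul_apply, one_apply, hf.eq_iff]

theorem extendByOne_apply_of_notMem_range {f : κ → ι} (M : Matrix κ κ α) {k l : ι}
    (h : k ∉ Set.range f ∨ l ∉ Set.range f) : extendByOne f M k l = (1 : Matrix ι ι α) k l := by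
  rcases h with h | h <;> simp only [Set.mem_range, not_exists] at h <;>
    simp [extendByOne, mul_apply, one_apply, h, fun x => Ne.symm (h x)]

theorem eq_extendByOne {f : κ → ι} (hf : Function.Injective f) {U : Matrix ι ι α}
    {M : Matrix κ κ α} (hblock : ∀ x y, U (f x) (f y) = M x y)
    (hoff : ∀ k l, k ∉ Set.range f ∨ l ∉ Set.range f → U k l = (1 : Matrix ι ι α) k l) :
    U = extendByOne f M := by
  ext k l
  by_cases hkl : k ∈ Set.range f ∧ l ∈ Set.range f
  · obtain ⟨⟨x, rfl⟩, ⟨y, rfl⟩⟩ := hkl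
    rw [hblock, extendByOne_apply_apply hf]
  · rw [not_and_or] at hkl
    rw [hoff k l hkl, extendByOne_apply_of_notMem_range M hkl]

section StarRing

variable [StarRing α]

theorem fromBlocks_mem_unitary {m n : Type*} [Fintype m] [Fintype n] [DecidableEq m]
    [DecidableEq n] {A : Matrix m m α} {D : Matrix n n α} (hA : A ∈ unitary (Matrix m m α))
    (hD : D ∈ unitary (Matrix n n α)) : fromBlocks A 0 0 D ∈ unitary (Matrix (m ⊕ n) (m ⊕ n) α) := by
  rw [Unitary.mem_iff, star_eq_conjTranspose, fromBlocks_conjTranspose, fromBlocks_multiply,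
    fromBlocks_multiply, ← star_eq_conjTranspose, ← star_eq_conjTranspose,
    Unitary.star_mul_self_of_mem hA, Unitary.mul_star_self_of_mem hA,
    Unitary.star_mul_self_of_mem hD, Unitary.mul_star_self_of_mem hD]
  simp

theorem twoByTwo_mem_unitary {t d₀ d₁ : α} (hd₀ : IsSelfAdjoint d₀) (hd₁ : IsSelfAdjoint d₁)
    (hleft : star t * t + d₀ * d₀ = 1) (hright : t * star t + d₁ * d₁ = 1)
    (hcomm : t * d₀ = d₁ * t) : !![t, -d₁; d₀, star t] ∈ unitary (Matrix (Fin 2) (Fin 2) α) := by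
  have hcomm' : d₀ * star t = star t * d₁ := by
    simpa [hd₀.star_eq, hd₁.star_eq] using congrArg star hcomm
  rw [Unitary.mem_iff, star_eq_conjTranspose]
  constructor <;> ext x y <;> fin_cases x <;> fin_cases y <;>
    simp [mul_apply, Fin.sum_univ_two, hd₀.star_eq, hd₁.star_eq, hleft, hright, hcomm, hcomm',
      add_comm (d₀ * d₀), add_comm (d₁ * d₁)]

end StarRing

end Matrix

theorem inner_e_left (k : ℕ) (f : H) : inner ℂ (e k) f = (f : ℕ → ℂ) k := by
  simp [e, lp.inner_single_left]

theorem inner_e_e (j k : ℕ) : inner ℂ (e j) (e k) = if j = k then (1 : ℂ) else 0 := by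
  rw [inner_e_left]
  by_cases h : j = k
  · simp [e, h]
  · simp [e, lp.single_apply, h]

theorem ext_inner_e {v w : H} (h : ∀ k, inner ℂ (e k) v = inner ℂ (e k) w) : v = w :=
  lp.ext <| funext fun k => by simpa [inner_e_left] using h k

theorem ext_e {A B : H →L[ℂ] H} (h : ∀ m, A (e m) = B (e m)) : A = B := by
  have hb : ⇑(HilbertBasis.ofRepr (LinearIsometryEquiv.refl ℂ H)) = e :=
    funext fun m => (HilbertBasis.repr_symm_single _ m).symm
  refine ContinuousLinearMap.ext_on (s := Set.range e) ?_ ?_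
  · rw [← hb, Submodule.dense_iff_topologicalClosure_eq_top]
    exact HilbertBasis.dense_span _
  · rintro _ ⟨m, rfl⟩
    exact h m

theorem adjoint_apply_e_of_weightedShift {T : H →L[ℂ] H} (w : ℕ → ℝ) (hT0 : T (e 0) = 0)
    (hT : ∀ m, T (e (m + 1)) = (w m : ℂ) • e m) (m : ℕ) :
    ContinuousLinearMap.adjoint T (e m) = (w m : ℂ) • e (m + 1) := by
  refine ext_inner_e fun k => ?_
  rw [ContinuousLinearMap.adjoint_inner_right]
  cases k with
  | zero => simp [hT0, inner_e_e]
  | succ k =>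
    rw [hT, inner_smul_left, inner_smul_right, inner_e_e, inner_e_e]
    by_cases h : k = m <;> simp [h]

theorem isSelfAdjoint_of_apply_e {A : H →L[ℂ] H} (c : ℕ → ℝ)
    (hA : ∀ m, A (e m) = (c m : ℂ) • e m) : IsSelfAdjoint A := by
  refine ext_e fun m => ext_inner_e fun k => ?_
  rw [ContinuousLinearMap.star_eq_adjoint, ContinuousLinearMap.adjoint_inner_right, hA, hA,
    inner_smul_left, inner_smul_right, inner_e_e]
  by_cases h : k = m <;> simp [h]

section

variable {q : ℝ} {S R D₀ D₁ : H →L[ℂ] H}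

theorem sqrt_one_sub_pow_mul_self (hq0 : 0 ≤ q) (hq1 : q ≤ 1) (m : ℕ) :
    ((√(1 - q ^ (2 * m + 2)) : ℝ) : ℂ) * ((√(1 - q ^ (2 * m + 2)) : ℝ) : ℂ)
      = 1 - ((q ^ (m + 1) : ℝ) : ℂ) * ((q ^ (m + 1) : ℝ) : ℂ) := by
  have : q ^ (2 * m + 2) ≤ 1 := pow_le_one₀ hq0 hq1
  rw [← Complex.ofReal_mul, Real.mul_self_sqrt (by linarith)]
  push_cast
  ring

theorem mul_shift_apply_e_succ (hS : ∀ m : ℕ, S (e (m + 1)) = e m)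
    (hR : ∀ m : ℕ, R (e m) = ((√(1 - q ^ (2 * m + 2)) : ℝ) : ℂ) • e m) (m : ℕ) :
    (R * S) (e (m + 1)) = ((√(1 - q ^ (2 * m + 2)) : ℝ) : ℂ) • e m := by
  rw [mul_apply_eq_comp, hS, hR]

theorem star_mul_shift_apply_e (hS0 : S (e 0) = 0) (hS : ∀ m : ℕ, S (e (m + 1)) = e m)
    (hR : ∀ m : ℕ, R (e m) = ((√(1 - q ^ (2 * m + 2)) : ℝ) : ℂ) • e m) (m : ℕ) :
    star (R * S) (e m) = ((√(1 - q ^ (2 * m + 2)) : ℝ) : ℂ) • e (m + 1) :=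
  adjoint_apply_e_of_weightedShift _ (by simp [hS0]) (mul_shift_apply_e_succ hS hR) m

theorem star_mul_shift_mul_add_mul_self (hq0 : 0 ≤ q) (hq1 : q ≤ 1) (hS0 : S (e 0) = 0)
    (hS : ∀ m : ℕ, S (e (m + 1)) = e m)
    (hR : ∀ m : ℕ, R (e m) = ((√(1 - q ^ (2 * m + 2)) : ℝ) : ℂ) • e m)
    (hD₀ : ∀ m : ℕ, D₀ (e m) = ((q ^ m : ℝ) : ℂ) • e m) :
    star (R * S) * (R * S) + D₀ * D₀ = 1 := by
  refine ext_e fun m => ?_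
  cases m with
  | zero => simp [hS0, hD₀]
  | succ m =>
    simp only [add_apply, mul_apply_eq_comp, hD₀, map_smul,
      mul_shift_apply_e_succ hS hR,
      star_mul_shift_apply_e hS0 hS hR, smul_smul, ← add_smul,
      sqrt_one_sub_pow_mul_self hq0 hq1, sub_add_cancel, one_smul, one_apply_eq_self]

theorem mul_shift_mul_star_add_mul_self (hq0 : 0 ≤ q) (hq1 : q ≤ 1) (hS0 : S (e 0) = 0)
    (hS : ∀ m : ℕ, S (e (m + 1)) = e m)
    (hR : ∀ m : ℕ, R (e m) = ((√(1 - q ^ (2 * m + 2)) : ℝ) : ℂ) • e m)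
    (hD₁ : ∀ m : ℕ, D₁ (e m) = ((q ^ (m + 1) : ℝ) : ℂ) • e m) :
    (R * S) * star (R * S) + D₁ * D₁ = 1 := by
  refine ext_e fun m => ?_
  simp only [add_apply, mul_apply_eq_comp _ (star _),
    mul_apply_eq_comp D₁, hD₁, map_smul, mul_shift_apply_e_succ hS hR,
    star_mul_shift_apply_e hS0 hS hR, smul_smul, ← add_smul,
    sqrt_one_sub_pow_mul_self hq0 hq1, sub_add_cancel, one_smul, one_apply_eq_self]

theorem mul_shift_mul_diag (hS0 : S (e 0) = 0) (hS : ∀ m : ℕ, S (e (m + 1)) = e m)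
    (hR : ∀ m : ℕ, R (e m) = ((√(1 - q ^ (2 * m + 2)) : ℝ) : ℂ) • e m)
    (hD₀ : ∀ m : ℕ, D₀ (e m) = ((q ^ m : ℝ) : ℂ) • e m)
    (hD₁ : ∀ m : ℕ, D₁ (e m) = ((q ^ (m + 1) : ℝ) : ℂ) • e m) :
    (R * S) * D₀ = D₁ * (R * S) := by
  refine ext_e fun m => ?_
  cases m with
  | zero => simp [hS0, hD₀]
  | succ m =>
    simp only [mul_apply_eq_comp _ D₀, mul_apply_eq_comp D₁, hD₀, hD₁,
      map_smul, mul_shift_apply_e_succ hS hR, smul_smul, mul_comm]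

end

open Matrix

section BlockIndex

/-- The `0`-based positions of the rows `i, i+1` and `2n-i, 2n-i+1`. -/
def siBlockIndex (n i : ℕ) (hi1 : 1 ≤ i) (hi2 : i ≤ n - 1) : Fin 2 ⊕ Fin 2 → Fin (2 * n) :=
  Sum.elim (fun x => ⟨i - 1 + x, by omega⟩) (fun x => ⟨2 * n - i - 1 + x, by omega⟩)

variable {n i : ℕ} {hi1 : 1 ≤ i} {hi2 : i ≤ n - 1}

theorem siBlockIndex_injective : Function.Injective (siBlockIndex n i hi1 hi2) := by
  rintro (x | x) (y | y) h <;> simp only [siBlockIndex, Sum.elim_inl, Sum.elim_inr, Fin.ext_iff,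
    Sum.inl.injEq, Sum.inr.injEq, reduceCtorEq] at h ⊢ <;> omega

theorem mem_range_siBlockIndex (k : Fin (2 * n)) :
    k ∈ Set.range (siBlockIndex n i hi1 hi2) ↔
      k.1 + 1 = i ∨ k.1 + 1 = i + 1 ∨ k.1 + 1 = 2 * n - i ∨ k.1 + 1 = 2 * n - i + 1 := by
  constructor
  · rintro ⟨x | x, rfl⟩ <;> fin_cases x <;> simp [siBlockIndex] <;> omega
  · intro h
    rcases h with h | h | h | h
    · exact ⟨.inl 0, Fin.ext (by simp [siBlockIndex]; omega)⟩
    · exact ⟨.inl 1, Fin.ext (by simp [siBlockIndex]; omega)⟩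
    · exact ⟨.inr 0, Fin.ext (by simp [siBlockIndex]; omega)⟩
    · exact ⟨.inr 1, Fin.ext (by simp [siBlockIndex]; omega)⟩

theorem eq_extendByOne_siBlockIndex {α : Type*} [Ring α] {U : Matrix (Fin (2 * n)) (Fin (2 * n)) α}
    {a b c d : α} (hU : ∀ k l : Fin (2 * n), U k l =
      if (k.1 + 1 = i ∧ l.1 + 1 = i) ∨ (k.1 + 1 = 2 * n - i ∧ l.1 + 1 = 2 * n - i) then a
      else if (k.1 + 1 = i + 1 ∧ l.1 + 1 = i + 1) ∨
          (k.1 + 1 = 2 * n - i + 1 ∧ l.1 + 1 = 2 * n - i + 1) then b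
      else if k.1 + 1 = i ∧ l.1 + 1 = i + 1 then -c
      else if k.1 + 1 = i + 1 ∧ l.1 + 1 = i then d
      else if k.1 + 1 = 2 * n - i ∧ l.1 + 1 = 2 * n - i + 1 then c
      else if k.1 + 1 = 2 * n - i + 1 ∧ l.1 + 1 = 2 * n - i then -d
      else if k = l then 1 else 0) :
    U = extendByOne (siBlockIndex n i hi1 hi2) (fromBlocks !![a, -c; d, b] 0 0 !![a, c; -d, b]) := by
  refine eq_extendByOne siBlockIndex_injective ?_ ?_
  · rintro (x | x) (y | y) <;> fin_cases x <;> fin_cases y <;>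
      simp only [hU, siBlockIndex, Sum.elim_inl, Sum.elim_inr, fromBlocks_apply₁₁,
        fromBlocks_apply₁₂, fromBlocks_apply₂₁, fromBlocks_apply₂₂, Fin.ext_iff] <;>
      repeat (first | rw [if_pos (by omega)] | rw [if_neg (by omega)])
    all_goals rfl
  · intro k l hkl
    simp only [mem_range_siBlockIndex, not_or] at hkl
    rcases hkl with hk | hl
    · simp only [hU, hk.1, hk.2.1, hk.2.2.1, hk.2.2.2, false_and, or_self, ↓reduceIte, one_apply]
    · simp only [hU, hl.1, hl.2.1, hl.2.2.1, hl.2.2.2, and_false, or_self, ↓reduceIte,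
        one_apply]

end BlockIndex

theorem pi_si_matrix_unitary_general
    (q : ℝ) (hq0 : 0 < q) (hq1 : q < 1)
    (n : ℕ) (i : ℕ) (hi1 : 1 ≤ i) (hi2 : i ≤ n - 1)
    (S : H →L[ℂ] H) (hS0 : S (e 0) = 0) (hS : ∀ m : ℕ, S (e (m + 1)) = e m)
    (R : H →L[ℂ] H) (hR : ∀ m : ℕ, R (e m) = ((Real.sqrt (1 - q ^ (2 * m + 2)) : ℝ) : ℂ) • e m)
    (D₁ : H →L[ℂ] H) (hD₁ : ∀ m : ℕ, D₁ (e m) = ((q ^ (m + 1) : ℝ) : ℂ) • e m)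
    (D₀ : H →L[ℂ] H) (hD₀ : ∀ m : ℕ, D₀ (e m) = ((q ^ m : ℝ) : ℂ) • e m)
    (U : Matrix (Fin (2 * n)) (Fin (2 * n)) (H →L[ℂ] H))
    (hU : ∀ k l : Fin (2 * n), U k l =
      if (k.1 + 1 = i ∧ l.1 + 1 = i) ∨ (k.1 + 1 = 2 * n - i ∧ l.1 + 1 = 2 * n - i) then
        R ∘L S
      else if (k.1 + 1 = i + 1 ∧ l.1 + 1 = i + 1) ∨
          (k.1 + 1 = 2 * n - i + 1 ∧ l.1 + 1 = 2 * n - i + 1) then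
        (ContinuousLinearMap.adjoint S) ∘L R
      else if k.1 + 1 = i ∧ l.1 + 1 = i + 1 then -D₁
      else if k.1 + 1 = i + 1 ∧ l.1 + 1 = i then D₀
      else if k.1 + 1 = 2 * n - i ∧ l.1 + 1 = 2 * n - i + 1 then D₁
      else if k.1 + 1 = 2 * n - i + 1 ∧ l.1 + 1 = 2 * n - i then -D₀
      else if k = l then 1 else 0) :
    U.conjTranspose * U = 1 ∧ U * U.conjTranspose = 1 := by
  have hD₀ₛ := isSelfAdjoint_of_apply_e _ hD₀
  have hD₁ₛ := isSelfAdjoint_of_apply_e _ hD₁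
  have hleft := star_mul_shift_mul_add_mul_self hq0.le hq1.le hS0 hS hR hD₀
  have hright := mul_shift_mul_star_add_mul_self hq0.le hq1.le hS0 hS hR hD₁
  have hcomm := mul_shift_mul_diag hS0 hS hR hD₀ hD₁
  have hstar : star (R * S) = ContinuousLinearMap.adjoint S ∘L R := by
    rw [star_mul, (isSelfAdjoint_of_apply_e _ hR).star_eq]
    rfl
  have hblock₁ := twoByTwo_mem_unitary hD₀ₛ hD₁ₛ hleft hright hcomm
  have hblock₂ := twoByTwo_mem_unitary (t := R * S) hD₀ₛ.neg hD₁ₛ.neg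
    (by rwa [neg_mul_neg]) (by rwa [neg_mul_neg]) (by rwa [mul_neg, neg_mul, neg_inj])
  rw [hstar] at hblock₁ hblock₂
  rw [neg_neg] at hblock₂
  obtain rfl := eq_extendByOne_siBlockIndex (hi1 := hi1) (hi2 := hi2) hU
  exact Unitary.mem_iff.mp
    (extendByOne_mem_unitary siBlockIndex_injective (fromBlocks_mem_unitary hblock₁ hblock₂))

/-- for `1 ≤ i ≤ n−1`, the `2n × 2n` operator matrix of the
elementary representation `π_{s_i}` (with entries `√(1−q^{2N+2})S`,
`S*√(1−q^{2N+2})`, `±q^{N+1}`, `±q^N` at the prescribed positions — rows and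
columns indexed `1, …, 2n` — and `δ_{kl}` elsewhere) is unitary:
`U*U = UU* = 1` in `M_{2n}(B(ℓ²(ℕ)))`. -/
theorem pi_si_matrix_unitary
    (q : ℝ) (hq0 : 0 < q) (hq1 : q < 1)
    (n : ℕ) (hn : 2 ≤ n) (i : ℕ) (hi1 : 1 ≤ i) (hi2 : i ≤ n - 1)
    (S : H →L[ℂ] H) (hS0 : S (e 0) = 0) (hS : ∀ m : ℕ, S (e (m + 1)) = e m)
    (R : H →L[ℂ] H) (hR : ∀ m : ℕ, R (e m) = ((Real.sqrt (1 - q ^ (2 * m + 2)) : ℝ) : ℂ) • e m)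
    (D₁ : H →L[ℂ] H) (hD₁ : ∀ m : ℕ, D₁ (e m) = ((q ^ (m + 1) : ℝ) : ℂ) • e m)
    (D₀ : H →L[ℂ] H) (hD₀ : ∀ m : ℕ, D₀ (e m) = ((q ^ m : ℝ) : ℂ) • e m)
    (U : Matrix (Fin (2 * n)) (Fin (2 * n)) (H →L[ℂ] H))
    (hU : ∀ k l : Fin (2 * n), U k l =
      if (k.1 + 1 = i ∧ l.1 + 1 = i) ∨ (k.1 + 1 = 2 * n - i ∧ l.1 + 1 = 2 * n - i) then
        R ∘L S
      else if (k.1 + 1 = i + 1 ∧ l.1 + 1 = i + 1) ∨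
          (k.1 + 1 = 2 * n - i + 1 ∧ l.1 + 1 = 2 * n - i + 1) then
        (ContinuousLinearMap.adjoint S) ∘L R
      else if k.1 + 1 = i ∧ l.1 + 1 = i + 1 then -D₁
      else if k.1 + 1 = i + 1 ∧ l.1 + 1 = i then D₀
      else if k.1 + 1 = 2 * n - i ∧ l.1 + 1 = 2 * n - i + 1 then D₁
      else if k.1 + 1 = 2 * n - i + 1 ∧ l.1 + 1 = 2 * n - i then -D₀
      else if k = l then 1 else 0) :
    U.conjTranspose * U = 1 ∧ U * U.conjTranspose = 1 :=
  pi_si_matrix_unitary_general q hq0 hq1 n i hi1 hi2 S hS0 hS R hR D₁ hD₁ D₀ hD₀ U hU
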